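/- Let (W,S) be the Coxeter system of type A_2, i.e. W is the symmetric group S_3 with simple reflections S = {s_1, s_2}, and let I = {s_1}. Then the minimal length coset representatives are ᴵW = {e, s_2, s_2s_1}, the induced Bruhat order on ᴵW is the chain e < s_2 < s_2s_1, and the spherical inverse Kazhdan–Lusztig polynomials satisfy m^{e,s_2} = v and m^{e,s_2s_1} = 0; in particular the monotonicity inequality m^{e,s_2} ⪯ v^{ℓ(s_2s_1)−ℓ(s_2)} · m^{e,s_2s_1} fails, so spherical inverse Kazhdan–Lusztig polynomials do not satisfy the monotonicity property. -/

import Mathlib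

/-!  Setup: the Hecke algebra of an arbitrary Coxeter system, its bar involution,
its Kazhdan–Lusztig basis, and (inverse) Kazhdan–Lusztig polynomials.  -/

noncomputable section

open LaurentPolynomial

namespace KLMonotonicity

/-- Coefficient-wise inequality `p ⪯ q` of Laurent polynomials in `v`:
`q - p` has non-negative coefficients. -/
def CoeffLE (p q : LaurentPolynomial ℤ) : Prop := ∀ n : ℤ, p.coeff n ≤ q.coeff n

/-- `p ∈ v·ℤ[v]`, i.e. all monomials of `p` have strictly positive degree. -/
def MemVZv (p : LaurentPolynomial ℤ) : Prop := ∀ n : ℤ, n ≤ 0 → p.coeff n = 0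

variable {B W : Type} [Group W] {M : CoxeterMatrix B}

/-- The Bruhat order on a Coxeter group: the reflexive-transitive closure of the
relation `a → a·t` for `t` a reflection with `ℓ(a) < ℓ(a·t)`. -/
def BruhatLE (cs : CoxeterSystem M W) : W → W → Prop :=
  Relation.ReflTransGen fun a b =>
    (∃ t : W, cs.IsReflection t ∧ b = a * t) ∧ cs.length a < cs.length b

/-- The strict Bruhat order. -/
def BruhatLT (cs : CoxeterSystem M W) (a b : W) : Prop := BruhatLE cs a b ∧ a ≠ b

/-- The data of (a realisation of) the Hecke algebra of the Coxeter system `cs` on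
a `ℤ[v,v⁻¹]`-algebra `H`: a standard basis `δ` indexed by `W`, satisfying the
quadratic relations `(δ_s + v)(δ_s - v⁻¹) = 0` for each simple reflection `s` and
the relations `δ_x · δ_y = δ_{xy}` whenever `ℓ(x) + ℓ(y) = ℓ(xy)`.  These
relations determine the multiplication of `H` completely, so any such `H` *is*
the Hecke algebra of `(W,S)`.  Here `v = T 1` and `v⁻¹ = T (-1)`. -/
structure HeckeAlgebra (cs : CoxeterSystem M W) (H : Type)
    [Ring H] [Algebra (LaurentPolynomial ℤ) H] where
  /-- the standard basis `{δ_x | x ∈ W}` -/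
  δ : Module.Basis W (LaurentPolynomial ℤ) H
  quadratic : ∀ i : B,
    (δ (cs.simple i) + algebraMap (LaurentPolynomial ℤ) H (T 1)) *
      (δ (cs.simple i) - algebraMap (LaurentPolynomial ℤ) H (T (-1))) = 0
  mul_of_length_add : ∀ x y : W, cs.length x + cs.length y = cs.length (x * y) →
    δ x * δ y = δ (x * y)

variable {cs : CoxeterSystem M W} {H : Type} [Ring H] [Algebra (LaurentPolynomial ℤ) H]

/-- The bar involution of the Hecke algebra: the unique ring involution which is
semilinear over `v ↦ v⁻¹` and sends `δ_x` to `(δ_{x⁻¹})⁻¹`. -/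
structure BarInvolution (A : HeckeAlgebra cs H) where
  bar : H ≃+* H
  bar_bar : ∀ h : H, bar (bar h) = h
  bar_smul : ∀ (p : LaurentPolynomial ℤ) (h : H), bar (p • h) = (invert p) • bar h
  bar_δ_mul : ∀ x : W, bar (A.δ x) * A.δ x⁻¹ = 1
  mul_bar_δ : ∀ x : W, A.δ x⁻¹ * bar (A.δ x) = 1

/-- The data of the Kazhdan–Lusztig basis `{b_x | x ∈ W}`: it is bar-invariant and
`b_x ∈ δ_x + Σ_{y < x} v ℤ[v] · δ_y`.  These conditions determine `b` uniquely. -/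
structure KLBasis (A : HeckeAlgebra cs H) (bar : BarInvolution A) where
  b : W → H
  selfDual : ∀ x : W, bar.bar (b x) = b x
  repr_self : ∀ x : W, A.δ.repr (b x) x = 1
  repr_lt : ∀ x y : W, y ≠ x → A.δ.repr (b x) y ≠ 0 → BruhatLT cs y x
  repr_mem : ∀ x y : W, y ≠ x → MemVZv (A.δ.repr (b x) y)

/-- The Kazhdan–Lusztig polynomial `h_{y,x}`, defined by `b_x = Σ_y h_{y,x} δ_y`. -/
def KLBasis.h {A : HeckeAlgebra cs H} {bar : BarInvolution A} (KL : KLBasis A bar)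
    (y x : W) : LaurentPolynomial ℤ := A.δ.repr (KL.b x) y

/-- `μ(y,x)`: the coefficient of `v` in the Kazhdan–Lusztig polynomial `h_{y,x}`. -/
def KLBasis.mu {A : HeckeAlgebra cs H} {bar : BarInvolution A} (KL : KLBasis A bar)
    (y x : W) : ℤ := (KL.h y x).coeff 1

/-- `hinv` is the family of inverse Kazhdan–Lusztig polynomials `h^{y,x}` for the
Kazhdan–Lusztig basis `b`, i.e. `δ_x = Σ_y (-1)^{ℓ(x) - ℓ(y)} h^{y,x} b_y`
(note `(-1)^{ℓ(x) - ℓ(y)} = (-1)^{ℓ(x) + ℓ(y)}`), the sum being finite. -/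
def IsInverseKL (A : HeckeAlgebra cs H) (b : W → H)
    (hinv : W → W → LaurentPolynomial ℤ) : Prop :=
  ∀ x : W, (Function.support fun y => hinv y x).Finite ∧
    A.δ x = ∑ᶠ y : W,
      (((-1 : LaurentPolynomial ℤ) ^ (cs.length x + cs.length y)) * hinv y x) • b y

/-!  Setup: the spherical module of a Coxeter system with respect to a subset
`I` of the simple reflections, its standard basis, induced bar involution,
spherical Kazhdan–Lusztig basis and inverse polynomials. -/

/-- `x` is the minimal length representative of its coset `W_I x`. -/
def IsMinimalRep (cs : CoxeterSystem M W) (I : Set B) (x : W) : Prop :=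
  ∀ w ∈ Subgroup.closure (cs.simple '' I), cs.length x ≤ cs.length (w * x)

/-- The data of (a realisation of) the spherical right `H`-module
`ᴵM = Ind_{H_I}^H triv^I` on a `ℤ[v,v⁻¹]`-module `N`: the standard basis
`{δ^I_x | x ∈ ᴵW}` indexed by the minimal length coset representatives,
together with the right action of each `δ_s` (`s ∈ S`), which is uniquely
determined:  `δ^I_x · δ_s = δ^I_{xs}` if `xs ∈ ᴵW`, `x < xs`;
`δ^I_x · δ_s = δ^I_{xs} + (v⁻¹ - v)·δ^I_x` if `xs ∈ ᴵW`, `xs < x`; and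
`δ^I_x · δ_s = v⁻¹·δ^I_x` if `xs ∉ ᴵW` (since then `δ^I_x · δ_s = triv^I(δ_u)·δ^I_x`
for a simple reflection `u ∈ W_I`).  These formulas characterise `ᴵM`. -/
structure SphericalModule (cs : CoxeterSystem M W) (I : Set B) (N : Type)
    [AddCommGroup N] [Module (LaurentPolynomial ℤ) N] where
  /-- the standard basis `{δ^I_x | x ∈ ᴵW}` -/
  δI : Module.Basis {x : W // IsMinimalRep cs I x} (LaurentPolynomial ℤ) N
  /-- the right action of the standard generator `δ_{s_i}` of `H` -/
  act : B → N →ₗ[LaurentPolynomial ℤ] N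
  act_up : ∀ (i : B) (x : {x : W // IsMinimalRep cs I x})
      (h : IsMinimalRep cs I (x.1 * cs.simple i)),
      cs.length x.1 < cs.length (x.1 * cs.simple i) →
      act i (δI x) = δI ⟨x.1 * cs.simple i, h⟩
  act_down : ∀ (i : B) (x : {x : W // IsMinimalRep cs I x})
      (h : IsMinimalRep cs I (x.1 * cs.simple i)),
      cs.length (x.1 * cs.simple i) < cs.length x.1 →
      act i (δI x) = δI ⟨x.1 * cs.simple i, h⟩ + ((T (-1) - T 1 : LaurentPolynomial ℤ)) • δI x
  act_notRep : ∀ (i : B) (x : {x : W // IsMinimalRep cs I x}),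
      ¬ IsMinimalRep cs I (x.1 * cs.simple i) →
      act i (δI x) = ((T (-1) : LaurentPolynomial ℤ)) • δI x

/-- The involution of the spherical module induced by the bar involution of `H`:
it is semilinear over `v ↦ v⁻¹`, fixes `δ^I_1 = 1 ⊗ δ_1`, and satisfies
`bar(n · δ_s) = bar(n) · bar(δ_s) = bar(n) · (δ_s + (v - v⁻¹))`.  These
conditions determine it uniquely. -/
structure SphericalBar {cs : CoxeterSystem M W} {I : Set B} {N : Type}
    [AddCommGroup N] [Module (LaurentPolynomial ℤ) N]
    (SM : SphericalModule cs I N) where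
  bar : N ≃+ N
  bar_bar : ∀ n : N, bar (bar n) = n
  bar_smul : ∀ (p : LaurentPolynomial ℤ) (n : N), bar (p • n) = (invert p) • bar n
  bar_act : ∀ (i : B) (n : N),
    bar (SM.act i n) = SM.act i (bar n) + ((T 1 - T (-1) : LaurentPolynomial ℤ)) • bar n
  bar_one : ∀ h : IsMinimalRep cs I 1, bar (SM.δI ⟨1, h⟩) = SM.δI ⟨1, h⟩

/-- The data of the spherical Kazhdan–Lusztig basis `{c_x | x ∈ ᴵW}`: it is
bar-invariant and `c_x ∈ δ^I_x + Σ_{y < x} v ℤ[v] · δ^I_y`.  These conditions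
determine `c` uniquely. -/
structure SKLBasis {cs : CoxeterSystem M W} {I : Set B} {N : Type}
    [AddCommGroup N] [Module (LaurentPolynomial ℤ) N]
    (SM : SphericalModule cs I N) (bar : SphericalBar SM) where
  c : {x : W // IsMinimalRep cs I x} → N
  selfDual : ∀ x, bar.bar (c x) = c x
  repr_self : ∀ x, SM.δI.repr (c x) x = 1
  repr_lt : ∀ x y, y ≠ x → SM.δI.repr (c x) y ≠ 0 → BruhatLT cs y.1 x.1
  repr_mem : ∀ x y, y ≠ x → MemVZv (SM.δI.repr (c x) y)

/-- `minv` is the family of spherical inverse Kazhdan–Lusztig polynomials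
`m^{y,x}`, i.e. `δ^I_x = Σ_y (-1)^{ℓ(x) - ℓ(y)} m^{y,x} c_y`
(note `(-1)^{ℓ(x) - ℓ(y)} = (-1)^{ℓ(x) + ℓ(y)}`), the sum being finite. -/
def IsInverseSKL {cs : CoxeterSystem M W} {I : Set B} {N : Type}
    [AddCommGroup N] [Module (LaurentPolynomial ℤ) N]
    (SM : SphericalModule cs I N)
    (c : {x : W // IsMinimalRep cs I x} → N)
    (minv : {x : W // IsMinimalRep cs I x} → {x : W // IsMinimalRep cs I x} →
      LaurentPolynomial ℤ) : Prop :=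
  ∀ x, (Function.support fun y => minv y x).Finite ∧
    SM.δI x = ∑ᶠ y,
      (((-1 : LaurentPolynomial ℤ) ^ (cs.length x.1 + cs.length y.1)) * minv y x) • c y

/-!
Write `s₀ = cs.simple 0`, `s₁ = cs.simple 1` (the paper's `s₁`, `s₂`) and `v = T 1`.
For `I = {s₀}` the module `ᴵM` is free on `δ_e, δ_{s₁}, δ_{s₁s₀}`, and
`δ_{s₁} = δ_e · δ_{s₁}`, `δ_{s₁s₀} = δ_{s₁} · δ_{s₀}`, so the bar involution is explicit
in these coordinates. Bar invariance together with the degree condition then forces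
`c_{s₁} = δ_{s₁} + v δ_e` and `c_{s₁s₀} = δ_{s₁s₀} + v δ_{s₁} + v² δ_e`. Inverting this
unitriangular matrix gives `δ_{s₁} = c_{s₁} - v c_e` and `δ_{s₁s₀} = c_{s₁s₀} - v c_{s₁}`:
the coefficient of `c_e` drops from `v` to `0` going up the chain, which breaks monotonicity.
-/

section LaurentPolynomial

variable {R : Type*} [Semiring R]

theorem T_one_mul_T_neg_one : (T 1 : R[T;T⁻¹]) * T (-1) = 1 := by
  rw [← T_add, add_neg_cancel, T_zero]

theorem T_one_mul_T_one : (T 1 : R[T;T⁻¹]) * T 1 = T 2 := by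
  rw [← T_add, one_add_one_eq_two]

theorem T_neg_one_mul_T_neg_one : (T (-1) : R[T;T⁻¹]) * T (-1) = T (-2) := by
  rw [← T_add]; norm_num

end LaurentPolynomial

theorem eq_T_of_sub_invert_eq {p : LaurentPolynomial ℤ} {k : ℤ} (hp : MemVZv p) (hk : 0 < k)
    (h : p - invert p = T k - T (-k)) : p = T k := by
  ext n
  have hn := congrArg (fun q : LaurentPolynomial ℤ => q.coeff n) h
  simp only [AddMonoidAlgebra.coeff_sub, Finsupp.coe_sub, Pi.sub_apply, invert_apply,
    T_apply] at hn
  rcases le_or_gt n 0 with hn0 | hn0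
  · rw [hp n hn0, T_apply, if_neg (by omega)]
  · rw [hp (-n) (by omega), if_neg (show -k ≠ n by omega), sub_zero, sub_zero] at hn
    rw [hn, T_apply]

section Coxeter

variable {B W : Type} [Group W] {M : CoxeterMatrix B}

theorem BruhatLT.length_lt {cs : CoxeterSystem M W} {a b : W} (h : BruhatLT cs a b) :
    cs.length a < cs.length b := by
  obtain ⟨hle, hne⟩ := h
  obtain rfl | htg := Relation.reflTransGen_iff_eq_or_transGen.mp hle
  · exact absurd rfl hne
  · clear hle hne
    induction htg with
    | single h => exact h.2
    | tail _ h ih => exact ih.trans h.2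

theorem SKLBasis.repr_eq_zero_of_length_lt {cs : CoxeterSystem M W} {I : Set B} {N : Type}
    [AddCommGroup N] [Module (LaurentPolynomial ℤ) N] {SM : SphericalModule cs I N}
    {barN : SphericalBar SM} (C : SKLBasis SM barN) {x y : {x : W // IsMinimalRep cs I x}}
    (hlen : cs.length x.1 < cs.length y.1) : SM.δI.repr (C.c x) y = 0 := by
  by_contra h
  have hyx : y ≠ x := by rintro rfl; exact hlen.false
  exact (C.repr_lt x y hyx h).length_lt.not_gt hlen

variable (cs : CoxeterSystem M W)

theorem bruhatLT_mul_simple {w : W} {i : B} (h : cs.length w < cs.length (w * cs.simple i)) :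
    BruhatLT cs w (w * cs.simple i) :=
  ⟨.single ⟨⟨_, cs.isReflection_simple i, rfl⟩, h⟩, fun he => by rw [← he] at h; exact h.false⟩

theorem length_simple_mul_simple {i j : B} (h : cs.simple i ≠ cs.simple j) :
    cs.length (cs.simple i * cs.simple j) = 2 := by
  rcases cs.length_mul_simple (cs.simple i) j with h' | h'
  · simp [h']
  · refine absurd ?_ h
    rwa [cs.length_simple, Nat.add_eq_right, cs.length_eq_zero_iff, mul_eq_one_iff_eq_inv,
      cs.inv_simple] at h'

theorem mem_closure_simple_singleton {i : B} {w : W} :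
    w ∈ Subgroup.closure (cs.simple '' {i}) ↔ w = 1 ∨ w = cs.simple i := by
  rw [Set.image_singleton]
  refine ⟨fun hw => ?_, ?_⟩
  · induction hw using Subgroup.closure_induction with
    | mem w hw => exact .inr hw
    | one => exact .inl rfl
    | mul x y _ _ hx hy => rcases hx with rfl | rfl <;> rcases hy with rfl | rfl <;> simp
    | inv x _ hx => rcases hx with rfl | rfl <;> simp
  · rintro (rfl | rfl)
    · exact one_mem _
    · exact Subgroup.subset_closure rfl

theorem isMinimalRep_singleton_iff {i : B} {x : W} :
    IsMinimalRep cs {i} x ↔ cs.length x ≤ cs.length (cs.simple i * x) := by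
  refine ⟨fun h => h _ ((mem_closure_simple_singleton cs).mpr (.inr rfl)), fun h w hw => ?_⟩
  rcases (mem_closure_simple_singleton cs).mp hw with rfl | rfl
  · rw [one_mul]
  · exact h

end Coxeter

namespace TypeA2

section Group

variable {W : Type} [Group W] (cs : CoxeterSystem (CoxeterMatrix.A 2) W)

def toPerm : W →* Equiv.Perm (Fin 3) :=
  cs.lift ⟨![Equiv.swap 0 1, Equiv.swap 1 2], by unfold CoxeterMatrix.IsLiftable; decide⟩

theorem toPerm_simple (i : Fin 2) :
    toPerm cs (cs.simple i) = ![Equiv.swap 0 1, Equiv.swap 1 2] i :=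
  cs.lift_apply_simple _ i

theorem simple_zero_ne_simple_one : cs.simple 0 ≠ cs.simple 1 := fun h => by
  have := congrArg (toPerm cs) h
  simp only [toPerm_simple] at this
  exact absurd this (by decide)

theorem braid :
    cs.simple 0 * cs.simple 1 * cs.simple 0 = cs.simple 1 * cs.simple 0 * cs.simple 1 := by
  have h := cs.simple_mul_simple_pow 0 1
  rw [show CoxeterMatrix.A 2 0 1 = 3 by decide] at h
  rw [← mul_inv_eq_one]
  simpa [pow_succ, mul_assoc] using h

@[simp] theorem length_simple_zero_mul_simple_one : cs.length (cs.simple 0 * cs.simple 1) = 2 :=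
  length_simple_mul_simple cs (simple_zero_ne_simple_one cs)

@[simp] theorem length_simple_one_mul_simple_zero : cs.length (cs.simple 1 * cs.simple 0) = 2 :=
  length_simple_mul_simple cs (simple_zero_ne_simple_one cs).symm

@[simp] theorem length_longest : cs.length (cs.simple 0 * cs.simple 1 * cs.simple 0) = 3 := by
  rcases cs.length_mul_simple (cs.simple 0 * cs.simple 1) 0 with h | h
  · rw [h, length_simple_zero_mul_simple_one]
  · rw [length_simple_zero_mul_simple_one] at h
    obtain ⟨i, hi⟩ := cs.length_eq_one_iff.mp
      (show cs.length (cs.simple 0 * cs.simple 1 * cs.simple 0) = 1 by omega)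
    have := congrArg (toPerm cs) hi
    simp only [map_mul, toPerm_simple] at this
    fin_cases i <;> exact absurd this (by decide)

theorem univ_eq : (Set.univ : Set W) = {1, cs.simple 0, cs.simple 1, cs.simple 0 * cs.simple 1,
    cs.simple 1 * cs.simple 0, cs.simple 0 * cs.simple 1 * cs.simple 0} := by
  refine (Set.eq_univ_of_forall fun x => ?_).symm
  induction x using cs.simple_induction_left with
  | one => simp
  | mul_simple_left w i ih =>
    fin_cases i <;> rcases ih with rfl | rfl | rfl | rfl | rfl | rfl <;> simp [← mul_assoc, braid]

theorem setOf_isMinimalRep :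
    {x : W | IsMinimalRep cs {0} x} = {1, cs.simple 1, cs.simple 1 * cs.simple 0} := by
  ext x
  simp only [Set.mem_ofPred_eq, isMinimalRep_singleton_iff]
  constructor
  · intro h
    have hx : x ∈ Set.univ := trivial
    rw [univ_eq cs] at hx
    rcases hx with rfl | rfl | rfl | rfl | rfl | rfl <;> simp [← mul_assoc] at h ⊢
  · rintro (rfl | rfl | rfl) <;> simp [← mul_assoc]

def repOne : {x : W // IsMinimalRep cs {0} x} :=
  ⟨1, by simp [isMinimalRep_singleton_iff]⟩

def repSimple : {x : W // IsMinimalRep cs {0} x} :=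
  ⟨cs.simple 1, by simp [isMinimalRep_singleton_iff]⟩

def repSimpleMul : {x : W // IsMinimalRep cs {0} x} :=
  ⟨cs.simple 1 * cs.simple 0, by simp [isMinimalRep_singleton_iff, ← mul_assoc]⟩

@[simp] theorem coe_repOne : (repOne cs).1 = 1 := rfl

@[simp] theorem coe_repSimple : (repSimple cs).1 = cs.simple 1 := rfl

@[simp] theorem coe_repSimpleMul : (repSimpleMul cs).1 = cs.simple 1 * cs.simple 0 := rfl

@[simp] theorem repOne_ne_repSimple : repOne cs ≠ repSimple cs :=
  ne_of_apply_ne (fun x => cs.length x.1) (by simp)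

@[simp] theorem repOne_ne_repSimpleMul : repOne cs ≠ repSimpleMul cs :=
  ne_of_apply_ne (fun x => cs.length x.1) (by simp)

@[simp] theorem repSimple_ne_repSimpleMul : repSimple cs ≠ repSimpleMul cs :=
  ne_of_apply_ne (fun x => cs.length x.1) (by simp)

theorem minRep_cases (x : {x : W // IsMinimalRep cs {0} x}) :
    x = repOne cs ∨ x = repSimple cs ∨ x = repSimpleMul cs := by
  have hx : x.1 ∈ {x : W | IsMinimalRep cs {0} x} := x.2
  rw [setOf_isMinimalRep] at hx
  rcases hx with hx | hx | hx
  exacts [.inl (Subtype.ext hx), .inr (.inl (Subtype.ext hx)), .inr (.inr (Subtype.ext hx))]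

theorem finsum_minRep {M : Type} [AddCommMonoid M] (f : {x : W // IsMinimalRep cs {0} x} → M) :
    ∑ᶠ x, f x = f (repOne cs) + f (repSimple cs) + f (repSimpleMul cs) := by
  classical
  rw [finsum_eq_sum_of_support_subset f (s := {repOne cs, repSimple cs, repSimpleMul cs})
    fun x _ => by rcases minRep_cases cs x with rfl | rfl | rfl <;> simp]
  rw [Finset.sum_insert (by simp), Finset.sum_insert (by simp), Finset.sum_singleton, add_assoc]

end Group

section SphericalModule

variable {W : Type} [Group W] {cs : CoxeterSystem (CoxeterMatrix.A 2) W}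
  {N : Type} [AddCommGroup N] [Module (LaurentPolynomial ℤ) N]
  (SM : SphericalModule cs {0} N)

def ofCoords (p q r : LaurentPolynomial ℤ) : N :=
  p • SM.δI (repOne cs) + q • SM.δI (repSimple cs) + r • SM.δI (repSimpleMul cs)

variable {SM}

@[simp] theorem repr_ofCoords_repOne (p q r : LaurentPolynomial ℤ) :
    SM.δI.repr (ofCoords SM p q r) (repOne cs) = p := by
  simp [ofCoords]

@[simp] theorem repr_ofCoords_repSimple (p q r : LaurentPolynomial ℤ) :
    SM.δI.repr (ofCoords SM p q r) (repSimple cs) = q := by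
  simp [ofCoords]

@[simp] theorem repr_ofCoords_repSimpleMul (p q r : LaurentPolynomial ℤ) :
    SM.δI.repr (ofCoords SM p q r) (repSimpleMul cs) = r := by
  simp [ofCoords]

theorem ofCoords_inj {p q r p' q' r' : LaurentPolynomial ℤ} :
    ofCoords SM p q r = ofCoords SM p' q' r' ↔ p = p' ∧ q = q' ∧ r = r' := by
  refine ⟨fun h => ?_, by rintro ⟨rfl, rfl, rfl⟩; rfl⟩
  rw [SM.δI.ext_elem_iff] at h
  exact ⟨by simpa using h (repOne cs), by simpa using h (repSimple cs),
    by simpa using h (repSimpleMul cs)⟩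

theorem eq_ofCoords_repr (n : N) :
    n = ofCoords SM (SM.δI.repr n (repOne cs)) (SM.δI.repr n (repSimple cs))
      (SM.δI.repr n (repSimpleMul cs)) := by
  refine SM.δI.ext_elem_iff.mpr fun x => ?_
  rcases minRep_cases cs x with rfl | rfl | rfl <;> simp

theorem ofCoords_add (p q r p' q' r' : LaurentPolynomial ℤ) :
    ofCoords SM p q r + ofCoords SM p' q' r' = ofCoords SM (p + p') (q + q') (r + r') := by
  simp only [ofCoords]; module

theorem smul_ofCoords (a p q r : LaurentPolynomial ℤ) :
    a • ofCoords SM p q r = ofCoords SM (a * p) (a * q) (a * r) := by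
  simp only [ofCoords]; module

theorem act_one_δI_repOne : SM.act 1 (SM.δI (repOne cs)) = SM.δI (repSimple cs) := by
  rw [SM.act_up 1 (repOne cs) (by simpa using (repSimple cs).2) (by simp)]
  exact congrArg SM.δI (Subtype.ext (one_mul _))

theorem act_zero_δI_repSimple : SM.act 0 (SM.δI (repSimple cs)) = SM.δI (repSimpleMul cs) :=
  SM.act_up 0 (repSimple cs) (repSimpleMul cs).2 (by simp)

theorem act_zero_δI_repOne :
    SM.act 0 (SM.δI (repOne cs)) = (T (-1) : LaurentPolynomial ℤ) • SM.δI (repOne cs) :=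
  SM.act_notRep 0 (repOne cs) (by simp [repOne, isMinimalRep_singleton_iff])

theorem bar_ofCoords (barN : SphericalBar SM) (p q r : LaurentPolynomial ℤ) :
    barN.bar (ofCoords SM p q r) = ofCoords SM
      (invert p + (T 1 - T (-1)) * invert q + (T 2 - 1) * invert r)
      (invert q + (T 1 - T (-1)) * invert r) (invert r) := by
  have hOne : barN.bar (SM.δI (repOne cs)) = SM.δI (repOne cs) := barN.bar_one _
  have hSimple : barN.bar (SM.δI (repSimple cs)) = ofCoords SM (T 1 - T (-1)) 1 0 := by
    rw [← act_one_δI_repOne, barN.bar_act, hOne, act_one_δI_repOne, ofCoords]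
    module
  have hSimpleMul :
      barN.bar (SM.δI (repSimpleMul cs)) = ofCoords SM (T 2 - 1) (T 1 - T (-1)) 1 := by
    rw [← act_zero_δI_repSimple, barN.bar_act, hSimple, ofCoords, ofCoords]
    simp only [map_add, map_smul, act_zero_δI_repOne, act_zero_δI_repSimple]
    linear_combination (norm := module)
      (T_one_mul_T_one (R := ℤ) - T_one_mul_T_neg_one (R := ℤ)) • SM.δI (repOne cs)
  simp only [ofCoords, map_add, barN.bar_smul, hOne, hSimple, hSimpleMul]
  module

end SphericalModule

section KazhdanLusztig

variable {W : Type} [Group W] {cs : CoxeterSystem (CoxeterMatrix.A 2) W}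
  {N : Type} [AddCommGroup N] [Module (LaurentPolynomial ℤ) N]
  {SM : SphericalModule cs {0} N} {barN : SphericalBar SM} (C : SKLBasis SM barN)

theorem c_repOne : C.c (repOne cs) = ofCoords SM 1 0 0 := by
  rw [eq_ofCoords_repr (SM := SM) (C.c _), C.repr_self,
    C.repr_eq_zero_of_length_lt (by simp), C.repr_eq_zero_of_length_lt (by simp)]

theorem c_repSimple : C.c (repSimple cs) = ofCoords SM (T 1) 1 0 := by
  have hc : C.c (repSimple cs) =
      ofCoords SM (SM.δI.repr (C.c (repSimple cs)) (repOne cs)) 1 0 := by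
    conv_lhs => rw [eq_ofCoords_repr (SM := SM) (C.c _)]
    rw [C.repr_self, C.repr_eq_zero_of_length_lt (y := repSimpleMul cs) (by simp)]
  have hp : SM.δI.repr (C.c (repSimple cs)) (repOne cs) = T 1 := by
    refine eq_T_of_sub_invert_eq (C.repr_mem _ _ (by simp)) one_pos ?_
    have hbar := C.selfDual (repSimple cs)
    rw [hc, bar_ofCoords, ofCoords_inj] at hbar
    simp only [map_one, map_zero, mul_one, mul_zero, add_zero, and_true] at hbar
    linear_combination -hbar
  rw [hc, hp]

theorem c_repSimpleMul : C.c (repSimpleMul cs) = ofCoords SM (T 2) (T 1) 1 := by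
  have hc : C.c (repSimpleMul cs) = ofCoords SM (SM.δI.repr (C.c (repSimpleMul cs)) (repOne cs))
      (SM.δI.repr (C.c (repSimpleMul cs)) (repSimple cs)) 1 := by
    conv_lhs => rw [eq_ofCoords_repr (SM := SM) (C.c _)]
    rw [C.repr_self]
  have hbar := C.selfDual (repSimpleMul cs)
  rw [hc, bar_ofCoords, ofCoords_inj] at hbar
  simp only [map_one, mul_one, and_true] at hbar
  obtain ⟨hOne, hSimple⟩ := hbar
  have hq : SM.δI.repr (C.c (repSimpleMul cs)) (repSimple cs) = T 1 := by
    refine eq_T_of_sub_invert_eq (C.repr_mem _ _ (by simp)) one_pos ?_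
    linear_combination -hSimple
  have hp : SM.δI.repr (C.c (repSimpleMul cs)) (repOne cs) = T 2 := by
    refine eq_T_of_sub_invert_eq (C.repr_mem _ _ (by simp)) two_pos ?_
    rw [hq, invert_T] at hOne
    linear_combination -hOne + T_one_mul_T_neg_one (R := ℤ) -
      T_neg_one_mul_T_neg_one (R := ℤ)
  rw [hc, hp, hq]

variable {C} {minv : {x : W // IsMinimalRep cs {0} x} → {x : W // IsMinimalRep cs {0} x} →
    LaurentPolynomial ℤ}

theorem δI_eq_ofCoords_minv (hIM : IsInverseSKL SM C.c minv)
    (x : {x : W // IsMinimalRep cs {0} x}) :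
    SM.δI x = ofCoords SM ((-1) ^ cs.length x.1 * (minv (repOne cs) x -
        T 1 * minv (repSimple cs) x + T 2 * minv (repSimpleMul cs) x))
      ((-1) ^ cs.length x.1 * (-minv (repSimple cs) x + T 1 * minv (repSimpleMul cs) x))
      ((-1) ^ cs.length x.1 * minv (repSimpleMul cs) x) := by
  rw [(hIM x).2, finsum_minRep, c_repOne, c_repSimple, c_repSimpleMul]
  simp only [smul_ofCoords, ofCoords_add, coe_repOne, coe_repSimple, coe_repSimpleMul,
    cs.length_one, cs.length_simple, length_simple_one_mul_simple_zero, ofCoords_inj]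
  exact ⟨by ring, by ring, by ring⟩

theorem minv_repOne_repSimple (hIM : IsInverseSKL SM C.c minv) :
    minv (repOne cs) (repSimple cs) = T 1 := by
  have h := δI_eq_ofCoords_minv hIM (repSimple cs)
  rw [show SM.δI (repSimple cs) = ofCoords SM 0 1 0 by simp [ofCoords], ofCoords_inj] at h
  simp only [coe_repSimple, cs.length_simple] at h
  obtain ⟨hOne, hSimple, hSimpleMul⟩ := h
  linear_combination hOne - T 1 * hSimple - (T 2 - T 1 * T 1) * hSimpleMul

theorem minv_repOne_repSimpleMul (hIM : IsInverseSKL SM C.c minv) :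
    minv (repOne cs) (repSimpleMul cs) = 0 := by
  have h := δI_eq_ofCoords_minv hIM (repSimpleMul cs)
  rw [show SM.δI (repSimpleMul cs) = ofCoords SM 0 0 1 by simp [ofCoords], ofCoords_inj] at h
  simp only [coe_repSimpleMul, length_simple_one_mul_simple_zero] at h
  obtain ⟨hOne, hSimple, hSimpleMul⟩ := h
  linear_combination -hOne + T 1 * hSimple + (T 2 - T 1 * T 1) * hSimpleMul +
    T_one_mul_T_one (R := ℤ)

end KazhdanLusztig

end TypeA2

/-- **Failure of monotonicity for spherical inverse Kazhdan–Lusztig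
polynomials** in type `A₂` with `I = {s₁}`:  the minimal length coset
representatives are `ᴵW = {e, s₂, s₂s₁}`, the induced Bruhat order on `ᴵW` is
the chain `e < s₂ < s₂s₁`, and `m^{e,s₂} = v`, `m^{e,s₂s₁} = 0`; in particular
`m^{e,s₂} ⪯ v^{ℓ(s₂s₁)-ℓ(s₂)}·m^{e,s₂s₁}` fails. -/
theorem spherical_inverse_kl_not_monotone
    {W : Type} [Group W] (cs : CoxeterSystem (CoxeterMatrix.Aₙ 2) W)
    {N : Type} [AddCommGroup N] [Module (LaurentPolynomial ℤ) N]
    (SM : SphericalModule cs ({0} : Set (Fin 2)) N) (barN : SphericalBar SM)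
    (C : SKLBasis SM barN)
    (minv : {x : W // IsMinimalRep cs ({0} : Set (Fin 2)) x} →
      {x : W // IsMinimalRep cs ({0} : Set (Fin 2)) x} → LaurentPolynomial ℤ)
    (hIM : IsInverseSKL SM C.c minv)
    (he : IsMinimalRep cs ({0} : Set (Fin 2)) 1)
    (hs2 : IsMinimalRep cs ({0} : Set (Fin 2)) (cs.simple 1))
    (hs21 : IsMinimalRep cs ({0} : Set (Fin 2)) (cs.simple 1 * cs.simple 0)) :
    {x : W | IsMinimalRep cs ({0} : Set (Fin 2)) x} =
        {1, cs.simple 1, cs.simple 1 * cs.simple 0} ∧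
    BruhatLT cs 1 (cs.simple 1) ∧
    BruhatLT cs (cs.simple 1) (cs.simple 1 * cs.simple 0) ∧
    minv ⟨1, he⟩ ⟨cs.simple 1, hs2⟩ = T 1 ∧
    minv ⟨1, he⟩ ⟨cs.simple 1 * cs.simple 0, hs21⟩ = 0 ∧
    ¬ CoeffLE (minv ⟨1, he⟩ ⟨cs.simple 1, hs2⟩)
        (T ((cs.length (cs.simple 1 * cs.simple 0) : ℤ) - (cs.length (cs.simple 1) : ℤ)) *
          minv ⟨1, he⟩ ⟨cs.simple 1 * cs.simple 0, hs21⟩) := by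
  have hm₁ : minv ⟨1, he⟩ ⟨cs.simple 1, hs2⟩ = T 1 := TypeA2.minv_repOne_repSimple hIM
  have hm₂ : minv ⟨1, he⟩ ⟨cs.simple 1 * cs.simple 0, hs21⟩ = 0 :=
    TypeA2.minv_repOne_repSimpleMul hIM
  refine ⟨TypeA2.setOf_isMinimalRep cs, ?_, ?_, hm₁, hm₂, ?_⟩
  · simpa using bruhatLT_mul_simple cs (w := 1) (i := 1) (by simp)
  · refine bruhatLT_mul_simple cs ?_
    rw [cs.length_simple]
    exact one_lt_two.trans_eq (TypeA2.length_simple_one_mul_simple_zero cs).symm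
  · rw [hm₁, hm₂, mul_zero]
    exact fun h => by simpa using h 1

end KLMonotonicity
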